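/- With respect to the encoding S₁′, for every m ≥ 1 the string 0^{p_m} has a unique minimal description, which uses the m-state transducer T_m; consequently 0^{p_m} ∈ L^{S₁′}_{=m}, and L^{S₁′}_{≤n−1} is strictly included in L^{S₁′}_{≤n} for every n ≥ 1. -/

import Mathlib

/-! ## Transducers

A deterministic sequential transducer over the binary alphabet `Bool`
(`false` = 0, `true` = 1), with state set `{0, …, n-1}` (representing the
states `1, …, n` of the paper) and start state `0` (the paper's state `1`). -/

structure Transducer where
  n : ℕ
  npos : 0 < n
  delta : Fin n → Bool → Fin n × List Bool

namespace Transducer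

/-- The start state. -/
def start (T : Transducer) : Fin T.n := ⟨0, T.npos⟩

/-- The (state) size of a transducer: its number of states. -/
def size (T : Transducer) : ℕ := T.n

/-- Running `T` from state `q` on an input string: resulting state and output. -/
def run (T : Transducer) (q : Fin T.n) : List Bool → Fin T.n × List Bool
  | [] => (q, [])
  | a :: x =>
    let s := T.delta q a
    let r := T.run s.1 x
    (r.1, s.2 ++ r.2)

/-- The function `{0,1}* → {0,1}*` computed by the transducer `T`. -/
def output (T : Transducer) (p : List Bool) : List Bool :=
  (T.run T.start p).2

end Transducer

/-- The one-state identity transducer. -/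
def idTransducer : Transducer :=
  ⟨1, Nat.one_pos, fun q b => (q, [b])⟩

/-! ## The standard encoding `S₀` -/

/-- `bin i`: the binary representation of `i ≥ 1`, most significant bit first. -/
def binRep (i : ℕ) : List Bool := (Nat.bits i).reverse

/-- `v† = v₁0v₂0⋯v_{m-1}0v_m1`. -/
def dagger : List Bool → List Bool
  | [] => []
  | [a] => [a, true]
  | a :: b :: v => a :: false :: dagger (b :: v)

/-- `v◇`: the bitwise complement of `(1v)†`. -/
def diamond (v : List Bool) : List Bool := (dagger (true :: v)).map (!·)

/-- The encoding `bin(i_t)‡ ⬝ v_t◇` of a single transition from state `j`,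
where `bin(i_t)‡ = ε` for a self-loop and `bin(i_t)† ` otherwise. -/
def encTransition {n : ℕ} (j : Fin n) (t : Fin n × List Bool) : List Bool :=
  (if t.1 = j then [] else dagger (binRep (t.1.val + 1))) ++ diamond t.2

/-- The standard encoding of a transducer: the concatenation, over the states
`j = 1, …, n` in order, of the encodings of the transitions on input `0` and
input `1` from `j`. -/
def stdEnc (T : Transducer) : List Bool :=
  (List.finRange T.n).flatMap fun j =>
    encTransition j (T.delta j false) ++ encTransition j (T.delta j true)

/-- `D_{S₀}`, the set of standard encodings of transducers. -/
def DS0 : Set (List Bool) := Set.range stdEnc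

/-- The set of sizes `|σ| + |p|` of descriptions `(T_σ, p)` of `x` with respect
to the standard encoding. -/
def stdSizes (x : List Bool) : Set ℕ :=
  {c | ∃ (T : Transducer) (p : List Bool),
    T.output p = x ∧ c = (stdEnc T).length + p.length}

/-- `C x`: the finite-state complexity of `x` w.r.t. the standard encoding. -/
noncomputable def Cstd (x : List Bool) : ℕ := sInf (stdSizes x)

/-- `L_{≤ m}` w.r.t. the standard encoding: strings having a minimal
description by a transducer with at most `m` states. -/
def stdLle (m : ℕ) : Set (List Bool) :=
  {x | ∃ (T : Transducer) (p : List Bool),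
    T.output p = x ∧ (stdEnc T).length + p.length = Cstd x ∧ T.size ≤ m}

/-! ## Computable encodings -/

/-- A computable encoding `S = (D_S, f_S)` of all transducers: a decidable
(computable) set `D_S ⊆ {0,1}*` together with a computable bijection
`f_S : D_S → 𝒯_DGSM`, presented via a decoding function
`decode : {0,1}* → Option Transducer` defined exactly on `D_S`; its
computability is expressed via the (injective) standard encoding `stdEnc`. -/
structure CompEncoding where
  D : Set (List Bool)
  dec : ComputablePred (· ∈ D)
  decode : List Bool → Option Transducer
  decode_dom : ∀ σ, (decode σ).isSome ↔ σ ∈ D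
  decode_inj : ∀ σ₁ ∈ D, ∀ σ₂ ∈ D, decode σ₁ = decode σ₂ → σ₁ = σ₂
  decode_surj : ∀ T : Transducer, ∃ σ, decode σ = some T
  decode_comp : Computable fun σ => (decode σ).map stdEnc

namespace CompEncoding

/-- The set of sizes `|σ| + |p|` of descriptions `(T^S_σ, p)` of `x`. -/
def sizes (S : CompEncoding) (x : List Bool) : Set ℕ :=
  {c | ∃ (σ : List Bool) (T : Transducer) (p : List Bool),
    S.decode σ = some T ∧ T.output p = x ∧ c = σ.length + p.length}

/-- `C_S x`: the finite-state complexity of `x` w.r.t. the encoding `S`. -/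
noncomputable def C (S : CompEncoding) (x : List Bool) : ℕ := sInf (S.sizes x)

/-- `L^S_{≤ m}`: strings having a minimal description by a transducer with at
most `m` states (this is empty for `m = 0` since every transducer has at
least one state). -/
def Lle (S : CompEncoding) (m : ℕ) : Set (List Bool) :=
  {x | ∃ (σ : List Bool) (T : Transducer) (p : List Bool),
    S.decode σ = some T ∧ T.output p = x ∧
    σ.length + p.length = S.C x ∧ T.size ≤ m}

/-- `L^S_{= m} = L^S_{≤ m} \ L^S_{≤ m-1}`. -/
def Leq (S : CompEncoding) (m : ℕ) : Set (List Bool) := S.Lle m \ S.Lle (m - 1)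

/-- `L^S_{∃min m}`: strings having a minimal description by a transducer with
exactly `m` states. -/
def LexistsMin (S : CompEncoding) (m : ℕ) : Set (List Bool) :=
  {x | ∃ (σ : List Bool) (T : Transducer) (p : List Bool),
    S.decode σ = some T ∧ T.output p = x ∧
    σ.length + p.length = S.C x ∧ T.size = m}

end CompEncoding

/-! ## The strings `u_i` and `x_n(m)` from the proof of Theorem 1 -/

/-- `u_i = 1 0^i 1^{2n+2-i}` (for `1 ≤ i ≤ 2n+1`, a string of length `2n+3`). -/
def u (n i : ℕ) : List Bool :=
  true :: (List.replicate i false ++ List.replicate (2 * n + 2 - i) true)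

/-- `x_n(m) = u_1^{m²} u_2^{m²} ⋯ u_{2n+1}^{m²}`. -/
def xnm (n m : ℕ) : List Bool :=
  (List.range (2 * n + 1)).flatMap fun i => (List.replicate (m ^ 2) (u n (i + 1))).flatten

/-! ## The transducer `T₁` and input `p₁` from the proof of Theorem 1 -/

/-- The `2n`-state transducer `T₁` with `Δ(j,0) = (j, u_j^m)` for `1 ≤ j ≤ 2n`,
`Δ(j,1) = (j+1, ε)` for `1 ≤ j ≤ 2n-1`, and `Δ(2n,1) = (2n, u_{2n+1}^m)`. -/
def T1 (n m : ℕ) (hn : 0 < n) : Transducer where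
  n := 2 * n
  npos := by omega
  delta := fun j b =>
    match b with
    | false => (j, (List.replicate m (u n (j.val + 1))).flatten)
    | true =>
      if h : j.val + 1 < 2 * n then (⟨j.val + 1, h⟩, [])
      else (j, (List.replicate m (u n (2 * n + 1))).flatten)

/-- `p₁ = (0^m 1)^{2n-1} 0^m 1^m`. -/
def p1 (n m : ℕ) : List Bool :=
  (List.replicate (2 * n - 1) (List.replicate m false ++ [true])).flatten
    ++ List.replicate m false ++ List.replicate m true

/-! ## The transducers `T_n` from Section 5 -/

/-- `p_i`: the `i`-th prime (`p₁ = 2`, `p₂ = 3`, …). -/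
noncomputable def nthPrime (i : ℕ) : ℕ := Nat.nth Nat.Prime (i - 1)

/-- The `n`-state transducer `T_n` with `Δ_n(1,0) = (1, 0^{p_n})`,
`Δ_n(i,0) = (i, ε)` for `2 ≤ i ≤ n`, `Δ_n(j,1) = (j+1, ε)` for
`1 ≤ j ≤ n-1`, and `Δ_n(n,1) = (n, ε)`. -/
noncomputable def Tsec5 (n : ℕ) (hn : 0 < n) : Transducer where
  n := n
  npos := hn
  delta := fun j b =>
    match b with
    | false =>
      if j.val = 0 then (j, List.replicate (nthPrime n) false) else (j, [])
    | true =>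
      if h : j.val + 1 < n then (⟨j.val + 1, h⟩, []) else (j, [])

/-- The defining properties of the encoding `S₁` of Theorem 4: each `T_n` is
encoded by `bin(n)`, and every transducer that is not one of the `T_n` is
encoded by `0` concatenated with its standard encoding. -/
def IsS1 (S : CompEncoding) : Prop :=
  (∀ (n : ℕ) (hn : 0 < n), S.decode (binRep n) = some (Tsec5 n hn)) ∧
  (∀ T : Transducer, (∀ (n : ℕ) (hn : 0 < n), T ≠ Tsec5 n hn) →
    S.decode (false :: stdEnc T) = some T)

/-- The defining properties of the encoding `S₁'` of Corollary 2: each `T_n` is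
encoded by `bin(n)† ⬝ 1^n`, and every transducer `T` that is not one of the
`T_n`, with standard encoding `σ`, is encoded by `0 ⬝ σ† ⬝ 1^{2^{|σ|}}`. -/
def IsS1' (S : CompEncoding) : Prop :=
  (∀ (n : ℕ) (hn : 0 < n),
    S.decode (dagger (binRep n) ++ List.replicate n true) = some (Tsec5 n hn)) ∧
  (∀ T : Transducer, (∀ (n : ℕ) (hn : 0 < n), T ≠ Tsec5 n hn) →
    S.decode (false :: (dagger (stdEnc T) ++
      List.replicate (2 ^ (stdEnc T).length) true)) = some T)

/-! Under `S₁'` the string `0^{p_m}` is described by `T_m` (code `bin(m)† 1^m`) with input `0`,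
at cost `2 |bin m| + m + 1`. A description by some `T_n` outputs a multiple of `p_n` zeros, so
`n = m`, the code is forced by injectivity, and the input must be a single `0` to be as short.
A description by any other transducer `T`, whose standard encoding has length `s`, costs
`1 + 2s + 2^s + |p|`; every transition of `T` outputs at most `c ≤ (s - 4) / 2` bits, so
`p_m ≤ c |p|`. Chebyshev's estimate `t π(N) ≤ t 2^t + 2N`, from `N# ≤ 4^N`, taken at
`t = 2c + 3` makes `p_m` large enough that `|p| + 2^s` exceeds `m + 2 |bin m|`. -/

open Finset Nat in
open scoped Nat.Prime in
theorem mul_primeCounting_le (t N : ℕ) : t * π N ≤ t * 2 ^ t + 2 * N := by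
  classical
  -- at most `2 ^ t` primes lie below `2 ^ t`; the product of the others is at most `N# ≤ 4 ^ N`
  set large := {p ∈ primesLE N | 2 ^ t ≤ p}
  have h_small : #(primesLE N) ≤ 2 ^ t + #large := by
    have : primesLE N \ large ⊆ range (2 ^ t) := fun p hp ↦ by
      simp only [large, mem_sdiff, mem_filter, not_and, not_le] at hp
      exact mem_range.mpr (hp.2 hp.1)
    have hsub : large ⊆ primesLE N := filter_subset _ _
    have := card_le_card this
    rw [card_range, card_sdiff_of_subset hsub] at this
    omega
  have h_large : 2 ^ (t * #large) ≤ 2 ^ (2 * N) :=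
    calc 2 ^ (t * #large) = (2 ^ t) ^ #large := pow_mul 2 t _
      _ ≤ ∏ p ∈ large, p := pow_card_le_prod _ _ _ fun p hp ↦ (mem_filter.mp hp).2
      _ ≤ ∏ p ∈ primesLE N, p :=
        prod_le_prod_of_subset_of_one_le' (filter_subset _ _)
          fun p hp _ ↦ (one_lt_of_mem_primesLE hp).le
      _ ≤ 4 ^ N := primorial_le_four_pow N
      _ = 2 ^ (2 * N) := by rw [pow_mul]; norm_num
  rw [← primesLE_card_eq_primeCounting]
  have := (Nat.pow_le_pow_iff_right one_lt_two).mp h_large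
  nlinarith [Nat.mul_le_mul_left t h_small]

lemma nthPrime_prime (m : ℕ) : (nthPrime m).Prime := Nat.prime_nth_prime (m - 1)

lemma eq_of_nthPrime_eq {n m : ℕ} (hn : 0 < n) (hm : 0 < m) (h : nthPrime n = nthPrime m) :
    n = m := by
  have := Nat.nth_injective Nat.infinite_setOfPred_prime h
  omega

lemma primeCounting_nthPrime {m : ℕ} (hm : 0 < m) : (nthPrime m).primeCounting = m := by
  rw [Nat.primeCounting, Nat.primeCounting', nthPrime,
    Nat.count_nth_succ_of_infinite Nat.infinite_setOfPred_prime]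
  omega

lemma mul_le_nthPrime (t : ℕ) {m : ℕ} (hm : 0 < m) : t * m ≤ t * 2 ^ t + 2 * nthPrime m := by
  simpa only [primeCounting_nthPrime hm] using mul_primeCounting_le t (nthPrime m)

lemma sq_le_two_pow {n : ℕ} (hn : 4 ≤ n) : n ^ 2 ≤ 2 ^ n := by
  induction n, hn using Nat.le_induction with
  | base => norm_num
  | succ n hn ih => rw [pow_succ 2 n]; nlinarith

lemma size_add_le_of_nthPrime_le_mul {m c P : ℕ} (hm : 0 < m) (hP : nthPrime m ≤ c * P) :
    2 * Nat.size m + m + 1 ≤ P + 2 ^ (2 * c + 4) := by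
  set b := Nat.size m
  set E := 2 ^ (2 * c + 3)
  have hc : 0 < c := Nat.pos_of_ne_zero fun h ↦ by
    simp [h, (nthPrime_prime m).pos.ne'] at hP
  have hE : 8 * c + 8 ≤ E := by
    have := Nat.lt_two_pow_self (n := 2 * c + 1)
    simp only [E, pow_succ] at this ⊢
    omega
  have hE4 : 2 ^ (2 * c + 4) = 2 * E := by simp only [E, pow_succ]; ring
  rw [hE4]
  refine Nat.le_of_mul_le_mul_left ?_ (by omega : 0 < 2 * c)
  rcases lt_or_ge m E with hmE | hmE
  · have hb : b ≤ 2 * c + 3 := Nat.size_le.mpr hmE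
    have : 2 * b + m + 1 ≤ 2 * E := by omega
    nlinarith
  have hprime : (2 * c + 3) * m ≤ (2 * c + 3) * E + 2 * nthPrime m := mul_le_nthPrime _ hm
  suffices 4 * c * b + 2 * c + 3 * E ≤ 3 * m + 2 * c * E by nlinarith
  have hcE : E ≤ c * E := Nat.le_mul_of_pos_left E hc
  rcases le_or_gt b (2 * c + 5) with hb | hb
  · nlinarith
  obtain ⟨d, hd⟩ : ∃ d, b = d + 1 := ⟨b - 1, by omega⟩
  have hmd : 2 ^ d ≤ m := Nat.lt_size.mp (by omega)
  have hEd : 4 * E ≤ 2 ^ d := by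
    rw [show d = 2 + (2 * c + 3) + (d - 2 * c - 5) by omega, pow_add, pow_add]
    exact Nat.le_mul_of_pos_right _ (by positivity)
  have hsq := sq_le_two_pow (show 4 ≤ d by omega)
  have hcb : 4 * c * b ≤ 2 * d ^ 2 := by
    rw [hd]
    nlinarith
  have hd4 : 4 * d + 4 ≤ d ^ 2 := by nlinarith
  nlinarith

@[simp]
lemma length_dagger (v : List Bool) : (dagger v).length = 2 * v.length := by
  induction v using dagger.induct <;> simp only [dagger, List.length_cons, List.length_nil, *]
  ring

@[simp]
lemma length_binRep (i : ℕ) : (binRep i).length = Nat.size i := by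
  simp [binRep, Nat.size_eq_bits_len]

lemma two_mul_length_delta_add_four_le (T : Transducer) (q : Fin T.n) (a : Bool) :
    2 * (T.delta q a).2.length + 4 ≤ (stdEnc T).length := by
  have hblock := List.le_sum_of_mem (List.mem_map_of_mem
    (f := fun j ↦ (encTransition j (T.delta j false) ++ encTransition j (T.delta j true)).length)
    (List.mem_finRange q))
  rw [stdEnc, List.length_flatMap]
  cases a <;> simp [encTransition, diamond] at hblock ⊢ <;> omega

namespace Transducer

lemma length_run_le (T : Transducer) {c : ℕ} (hc : ∀ q a, (T.delta q a).2.length ≤ c)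
    (q : Fin T.n) (p : List Bool) : (T.run q p).2.length ≤ c * p.length := by
  induction p generalizing q with
  | nil => simp [run]
  | cons a p ih =>
    simp only [run, List.length_append, List.length_cons, mul_add_one]
    linarith [hc q a, ih (T.delta q a).1]

lemma run_eq_replicate (T : Transducer) {d : ℕ}
    (hd : ∀ q a, (T.delta q a).2 = [] ∨ (T.delta q a).2 = List.replicate d false)
    (q : Fin T.n) (p : List Bool) :
    ∃ k ≤ p.length, (T.run q p).2 = List.replicate (k * d) false := by
  induction p generalizing q with
  | nil => exact ⟨0, le_rfl, by simp [run]⟩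
  | cons a p ih =>
    obtain ⟨k, hk, hrun⟩ := ih (T.delta q a).1
    rcases hd q a with h | h
    · exact ⟨k, by simp; omega, by simp [run, h, hrun]⟩
    · refine ⟨k + 1, by simp; omega, ?_⟩
      simp [run, h, hrun, add_mul, add_comm]

end Transducer

lemma Tsec5_delta (n : ℕ) (hn : 0 < n) (q : Fin n) (a : Bool) :
    ((Tsec5 n hn).delta q a).2 = [] ∨
      ((Tsec5 n hn).delta q a).2 = List.replicate (nthPrime n) false := by
  cases a <;> simp only [Tsec5] <;> split_ifs <;> simp

lemma Tsec5_output (n : ℕ) (hn : 0 < n) (p : List Bool) :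
    ∃ k ≤ p.length, (Tsec5 n hn).output p = List.replicate (k * nthPrime n) false :=
  (Tsec5 n hn).run_eq_replicate (Tsec5_delta n hn) _ p

lemma Tsec5_output_false (n : ℕ) (hn : 0 < n) :
    (Tsec5 n hn).output [false] = List.replicate (nthPrime n) false := by
  simp [Transducer.output, Transducer.run, Transducer.start, Tsec5]

lemma Tsec5_output_true (n : ℕ) (hn : 0 < n) : (Tsec5 n hn).output [true] = [] := by
  simp only [Transducer.output, Transducer.run, Transducer.start, Tsec5]
  split_ifs <;> rfl

lemma CompEncoding.eq_of_decode_eq_some (S : CompEncoding) {σ τ : List Bool} {T : Transducer}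
    (hσ : S.decode σ = some T) (hτ : S.decode τ = some T) : σ = τ :=
  S.decode_inj σ ((S.decode_dom σ).mp (by simp [hσ])) τ ((S.decode_dom τ).mp (by simp [hτ]))
    (hσ.trans hτ.symm)

namespace IsS1'

variable {S : CompEncoding} {m : ℕ} {σ p : List Bool} {T : Transducer}

lemma eq_code_of_decode_eq_Tsec5 (hS : IsS1' S) (hm : 0 < m) {n : ℕ} (hn : 0 < n)
    (hσ : S.decode σ = some (Tsec5 n hn))
    (hout : (Tsec5 n hn).output p = List.replicate (nthPrime m) false) :
    n = m ∧ σ = dagger (binRep n) ++ List.replicate n true ∧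
      (p = [false] ∨ 2 * Nat.size m + m + 1 < σ.length + p.length) := by
  obtain ⟨k, hkp, hk⟩ := Tsec5_output n hn p
  have hlen : k * nthPrime n = nthPrime m := by simpa [hk] using congrArg List.length hout
  have hnm : n = m := eq_of_nthPrime_eq hn hm <| (Nat.prime_dvd_prime_iff_eq (nthPrime_prime n)
    (nthPrime_prime m)).mp (Dvd.intro_left k hlen)
  subst hnm
  have hk1 : k = 1 := by
    simpa using Nat.eq_of_mul_eq_mul_right (nthPrime_prime n).pos (hlen.trans (one_mul _).symm)
  have hσ' := S.eq_of_decode_eq_some hσ (hS.1 n hn)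
  refine ⟨rfl, hσ', ?_⟩
  rw [hσ']
  match p, hkp with
  | [false], _ => exact .inl rfl
  | [true], _ => exact ((nthPrime_prime n).ne_zero (by simpa [Tsec5_output_true] using hout)).elim
  | _ :: _ :: _, _ => right; simp
  | [], hkp => simp_all

lemma lt_length_add_length_of_padded (hm : 0 < m)
    (hσ : σ = false :: (dagger (stdEnc T) ++ List.replicate (2 ^ (stdEnc T).length) true))
    (hout : T.output p = List.replicate (nthPrime m) false) :
    2 * Nat.size m + m + 1 < σ.length + p.length := by
  set s := (stdEnc T).length
  set c := (s - 4) / 2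
  have hchunk (q : Fin T.n) (a : Bool) : (T.delta q a).2.length ≤ c := by
    have := two_mul_length_delta_add_four_le T q a
    omega
  have hs : 2 * c + 4 ≤ s := by
    have := two_mul_length_delta_add_four_le T T.start false
    omega
  have hP : (T.output p).length ≤ c * p.length := T.length_run_le hchunk T.start p
  rw [hout, List.length_replicate] at hP
  have h2s : 2 ^ (2 * c + 4) ≤ 2 ^ s := Nat.pow_le_pow_right two_pos hs
  have := size_add_le_of_nthPrime_le_mul hm hP
  simp only [hσ, List.length_cons, List.length_append, length_dagger, List.length_replicate]
  omega

lemma eq_Tsec5_or_lt_length_add_length (hS : IsS1' S) (hm : 0 < m) (hσ : S.decode σ = some T)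
    (hout : T.output p = List.replicate (nthPrime m) false) :
    (T = Tsec5 m hm ∧ σ = dagger (binRep m) ++ List.replicate m true ∧ p = [false]) ∨
      2 * Nat.size m + m + 1 < σ.length + p.length := by
  by_cases hT : ∃ (n : ℕ) (hn : 0 < n), T = Tsec5 n hn
  · obtain ⟨n, hn, rfl⟩ := hT
    obtain ⟨rfl, hσ', hp | hlt⟩ := eq_code_of_decode_eq_Tsec5 hS hm hn hσ hout
    · exact .inl ⟨rfl, hσ', hp⟩
    · exact .inr hlt
  · have hσ' := S.eq_of_decode_eq_some hσ (hS.2 T fun n hn h ↦ hT ⟨n, hn, h⟩)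
    exact .inr (lt_length_add_length_of_padded hm hσ' hout)

lemma C_replicate_nthPrime (hS : IsS1' S) (hm : 0 < m) :
    S.C (List.replicate (nthPrime m) false) = 2 * Nat.size m + m + 1 := by
  have hmem : 2 * Nat.size m + m + 1 ∈ S.sizes (List.replicate (nthPrime m) false) :=
    ⟨_, _, [false], hS.1 m hm, Tsec5_output_false m hm, by simp⟩
  refine le_antisymm (Nat.sInf_le hmem) (le_csInf ⟨_, hmem⟩ ?_)
  rintro _ ⟨σ, T, p, hσ, hout, rfl⟩
  rcases eq_Tsec5_or_lt_length_add_length hS hm hσ hout with ⟨-, rfl, rfl⟩ | hlt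
  · simp
  · exact hlt.le

lemma eq_Tsec5_of_length_add_length_eq_C (hS : IsS1' S) (hm : 0 < m)
    (hσ : S.decode σ = some T) (hout : T.output p = List.replicate (nthPrime m) false)
    (hC : σ.length + p.length = S.C (List.replicate (nthPrime m) false)) :
    T = Tsec5 m hm ∧ σ = dagger (binRep m) ++ List.replicate m true ∧ p = [false] := by
  rw [C_replicate_nthPrime hS hm] at hC
  exact (eq_Tsec5_or_lt_length_add_length hS hm hσ hout).resolve_right hC.not_gt

lemma replicate_nthPrime_mem_Leq (hS : IsS1' S) (hm : 0 < m) :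
    List.replicate (nthPrime m) false ∈ S.Leq m := by
  refine ⟨⟨_, _, [false], hS.1 m hm, Tsec5_output_false m hm, ?_, le_rfl⟩, ?_⟩
  · simp [C_replicate_nthPrime hS hm]
  · rintro ⟨σ, T, p, hσ, hout, hC, hsize⟩
    obtain ⟨rfl, -, -⟩ := eq_Tsec5_of_length_add_length_eq_C hS hm hσ hout hC
    exact absurd hsize (by simp [Transducer.size, Tsec5]; omega)

end IsS1'

lemma CompEncoding.Lle_mono (S : CompEncoding) : Monotone S.Lle :=
  fun _ _ hmn _ ⟨σ, T, p, hσ, hout, hC, hsize⟩ ↦ ⟨σ, T, p, hσ, hout, hC, hsize.trans hmn⟩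

theorem stmt14 (S : CompEncoding) (hS : IsS1' S) :
    (∀ (m : ℕ) (hm : 0 < m),
      (∃ (σ p : List Bool), S.decode σ = some (Tsec5 m hm) ∧
        (Tsec5 m hm).output p = List.replicate (nthPrime m) false ∧
        σ.length + p.length = S.C (List.replicate (nthPrime m) false)) ∧
      (∀ (σ : List Bool) (T : Transducer) (p : List Bool),
        S.decode σ = some T → T.output p = List.replicate (nthPrime m) false →
        σ.length + p.length = S.C (List.replicate (nthPrime m) false) →
        T = Tsec5 m hm ∧ σ = dagger (binRep m) ++ List.replicate m true ∧ p = [false]) ∧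
      List.replicate (nthPrime m) false ∈ S.Leq m) ∧
    (∀ n : ℕ, 1 ≤ n → S.Lle (n - 1) ⊂ S.Lle n) := by
  refine ⟨fun m hm ↦ ⟨?_, fun σ T p ↦ hS.eq_Tsec5_of_length_add_length_eq_C hm,
    hS.replicate_nthPrime_mem_Leq hm⟩, fun n hn ↦ ?_⟩
  · exact ⟨_, [false], hS.1 m hm, Tsec5_output_false m hm,
      by simp [hS.C_replicate_nthPrime hm]⟩
  · obtain ⟨hle, hnle⟩ := hS.replicate_nthPrime_mem_Leq hn
    exact (Set.ssubset_iff_of_subset (S.Lle_mono (Nat.sub_le n 1))).mpr ⟨_, hle, hnle⟩
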